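/- arXiv:1808.05760 — 2 statements merged into one kernel-verified Lean document; each statement's English description precedes it below -/
import Mathlib

section
/- A context x ∈ ℝ^d cannot be ε-strongly attacked into pulling a* if and only if there exists an arm a ≠ a* such that both of the following hold: (i) X_{a*} x = 0 and X_a x = 0, and (ii) α_{a*}‖x‖_{V_{a*}⁻¹} < ε + α_a‖x‖_{V_a⁻¹}. -/
/-!
Since `V_a⁻¹` is symmetric, `xᵀ θ̂_a(Δ_a) = ⟪X_a V_a⁻¹ x, y_a + Δ_a⟫`, and `X_a V_a⁻¹ x = 0` exactly
when `X_a x = 0` (then `V_a x = λ x`). So the attacker can move the index of an arm with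
`X_a x ≠ 0` to any real value through `Δ_a` alone, while the index of an arm with `X_a x = 0` is
frozen at `α_a ‖x‖_{V_a⁻¹}`. If the target can be moved, lift it above everything; if it is
frozen, push every movable arm below it, and the attack fails exactly when some frozen arm is not
`ε` below the frozen target.
-/

open Matrix

/-- The regularized Gram matrix `V = XᵀX + λI`. -/
noncomputable def Vmat {m d : ℕ} (lam : ℝ) (X : Matrix (Fin m) (Fin d) ℝ) :
    Matrix (Fin d) (Fin d) ℝ :=
  Xᵀ * X + lam • (1 : Matrix (Fin d) (Fin d) ℝ)

/-- The Mahalanobis norm `‖x‖_{V⁻¹} = √(xᵀ V⁻¹ x)`. -/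
noncomputable def mahNorm {d : ℕ} (V : Matrix (Fin d) (Fin d) ℝ) (x : Fin d → ℝ) : ℝ :=
  Real.sqrt (x ⬝ᵥ (V⁻¹ *ᵥ x))

/-- The post-attack ridge regression estimate `θ̂ = V⁻¹ Xᵀ (y + Δ)`. -/
noncomputable def thetaHat {m d : ℕ} (lam : ℝ) (X : Matrix (Fin m) (Fin d) ℝ)
    (y Δ : Fin m → ℝ) : Fin d → ℝ :=
  (Vmat lam X)⁻¹ *ᵥ (Xᵀ *ᵥ (y + Δ))

/-- The post-attack UCB index of arm `a` at context `x`: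
`xᵀ θ̂_a(Δ_a) + α_a ‖x‖_{V_a⁻¹}`. -/
noncomputable def ucbIndex {K d : ℕ} (lam : ℝ) (m : Fin K → ℕ)
    (X : ∀ a, Matrix (Fin (m a)) (Fin d) ℝ) (y : ∀ a, Fin (m a) → ℝ)
    (α : Fin K → ℝ) (Δ : ∀ a, Fin (m a) → ℝ) (x : Fin d → ℝ) (a : Fin K) : ℝ :=
  x ⬝ᵥ thetaHat lam (X a) (y a) (Δ a) + α a * mahNorm (Vmat lam (X a)) x

/-- The perturbation family `Δ` ε-strongly attacks context `x` into pulling arm `astar`. -/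
def StronglyAttacks {K d : ℕ} (lam : ℝ) (m : Fin K → ℕ)
    (X : ∀ a, Matrix (Fin (m a)) (Fin d) ℝ) (y : ∀ a, Fin (m a) → ℝ)
    (α : Fin K → ℝ) (astar : Fin K) (ε : ℝ)
    (Δ : ∀ a, Fin (m a) → ℝ) (x : Fin d → ℝ) : Prop :=
  ∀ a : Fin K, a ≠ astar →
    ucbIndex lam m X y α Δ x astar ≥ ε + ucbIndex lam m X y α Δ x a

/-- The perturbation family `Δ` weakly attacks context `x` into pulling arm `astar`. -/
def WeaklyAttacks {K d : ℕ} (lam : ℝ) (m : Fin K → ℕ)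
    (X : ∀ a, Matrix (Fin (m a)) (Fin d) ℝ) (y : ∀ a, Fin (m a) → ℝ)
    (α : Fin K → ℝ) (astar : Fin K)
    (Δ : ∀ a, Fin (m a) → ℝ) (x : Fin d → ℝ) : Prop :=
  ∀ a : Fin K, a ≠ astar →
    ucbIndex lam m X y α Δ x astar > ucbIndex lam m X y α Δ x a

lemma exists_dotProduct_add_eq {R ι : Type*} [Field R] [Fintype ι] {c : ι → R} (hc : c ≠ 0)
    (y : ι → R) (t : R) : ∃ δ : ι → R, c ⬝ᵥ (y + δ) = t := by
  classical
  obtain ⟨i, hi⟩ := Function.ne_iff.mp hc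
  refine ⟨Pi.single i ((t - c ⬝ᵥ y) / c i), ?_⟩
  rw [dotProduct_add, dotProduct_single, mul_div_cancel₀ _ hi, add_sub_cancel]

section Ridge

variable {m d : ℕ} {lam : ℝ} (X : Matrix (Fin m) (Fin d) ℝ)

theorem Vmat_posDef (hlam : 0 < lam) : (Vmat lam X).PosDef :=
  PosDef.posSemidef_add (by simpa using posSemidef_conjTranspose_mul_self X)
    (PosDef.one.smul hlam)

theorem Vmat_isUnit_det (hlam : 0 < lam) : IsUnit (Vmat lam X).det :=
  (isUnit_iff_isUnit_det _).mp (Vmat_posDef X hlam).isUnit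

theorem Vmat_mulVec (v : Fin d → ℝ) : Vmat lam X *ᵥ v = Xᵀ *ᵥ (X *ᵥ v) + lam • v := by
  rw [Vmat, add_mulVec, smul_mulVec, one_mulVec, mulVec_mulVec]

theorem Vmat_inv_transpose : ((Vmat lam X)⁻¹)ᵀ = (Vmat lam X)⁻¹ := by
  rw [transpose_nonsing_inv, Vmat, transpose_add, transpose_mul, transpose_transpose,
    transpose_smul, transpose_one]

theorem dotProduct_thetaHat (y Δ : Fin m → ℝ) (x : Fin d → ℝ) :
    x ⬝ᵥ thetaHat lam X y Δ = (X *ᵥ ((Vmat lam X)⁻¹ *ᵥ x)) ⬝ᵥ (y + Δ) := by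
  rw [thetaHat, dotProduct_mulVec, dotProduct_mulVec, vecMul_transpose,
    ← mulVec_transpose, Vmat_inv_transpose]

theorem Vmat_inv_mulVec_of_mulVec_eq_zero (hlam : 0 < lam) {x : Fin d → ℝ}
    (hx : X *ᵥ x = 0) : (Vmat lam X)⁻¹ *ᵥ x = lam⁻¹ • x := by
  have hV : Vmat lam X *ᵥ (lam⁻¹ • x) = x := by
    rw [Vmat_mulVec, mulVec_smul, hx, smul_zero, mulVec_zero, zero_add, smul_smul,
      mul_inv_cancel₀ hlam.ne', one_smul]
  calc (Vmat lam X)⁻¹ *ᵥ x = ((Vmat lam X)⁻¹ * Vmat lam X) *ᵥ (lam⁻¹ • x) := by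
        rw [← mulVec_mulVec, hV]
    _ = lam⁻¹ • x := by rw [nonsing_inv_mul _ (Vmat_isUnit_det X hlam), one_mulVec]

theorem mulVec_Vmat_inv_mulVec_eq_zero_iff (hlam : 0 < lam) (x : Fin d → ℝ) :
    X *ᵥ ((Vmat lam X)⁻¹ *ᵥ x) = 0 ↔ X *ᵥ x = 0 := by
  refine ⟨fun h => ?_, fun h => ?_⟩
  · have hx : x = lam • ((Vmat lam X)⁻¹ *ᵥ x) := by
      have := Vmat_mulVec (lam := lam) X ((Vmat lam X)⁻¹ *ᵥ x)
      rwa [mulVec_mulVec, mul_nonsing_inv _ (Vmat_isUnit_det X hlam), one_mulVec, h,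
        mulVec_zero, zero_add] at this
    rw [hx, mulVec_smul, h, smul_zero]
  · rw [Vmat_inv_mulVec_of_mulVec_eq_zero X hlam h, mulVec_smul, h, smul_zero]

end Ridge

section Bandit

variable {K d : ℕ} {lam : ℝ} {m : Fin K → ℕ} {X : ∀ a, Matrix (Fin (m a)) (Fin d) ℝ}
  {y : ∀ a, Fin (m a) → ℝ} {α : Fin K → ℝ} {Δ Δ' : ∀ a, Fin (m a) → ℝ} {x : Fin d → ℝ}
  {a astar : Fin K} {ε : ℝ}

theorem ucbIndex_eq :
    ucbIndex lam m X y α Δ x a = (X a *ᵥ ((Vmat lam (X a))⁻¹ *ᵥ x)) ⬝ᵥ (y a + Δ a)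
      + α a * mahNorm (Vmat lam (X a)) x := by
  rw [ucbIndex, dotProduct_thetaHat]

theorem ucbIndex_congr (h : Δ a = Δ' a) :
    ucbIndex lam m X y α Δ x a = ucbIndex lam m X y α Δ' x a := by
  rw [ucbIndex, ucbIndex, h]

theorem ucbIndex_of_mulVec_eq_zero (hlam : 0 < lam) (Δ : ∀ a, Fin (m a) → ℝ)
    (h : X a *ᵥ x = 0) :
    ucbIndex lam m X y α Δ x a = α a * mahNorm (Vmat lam (X a)) x := by
  rw [ucbIndex_eq, (mulVec_Vmat_inv_mulVec_eq_zero_iff _ hlam x).mpr h, zero_dotProduct,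
    zero_add]

theorem exists_ucbIndex_eq (hlam : 0 < lam) (h : X a *ᵥ x ≠ 0) (t : ℝ) :
    ∃ Δ : ∀ a, Fin (m a) → ℝ, ucbIndex lam m X y α Δ x a = t := by
  classical
  have hc := (mulVec_Vmat_inv_mulVec_eq_zero_iff (X a) hlam x).not.mpr h
  obtain ⟨δ, hδ⟩ := exists_dotProduct_add_eq hc (y a) (t - α a * mahNorm (Vmat lam (X a)) x)
  exact ⟨Pi.single a δ, by rw [ucbIndex_eq, Pi.single_eq_same, hδ, sub_add_cancel]⟩

theorem exists_stronglyAttacks_of_mulVec_ne_zero (hlam : 0 < lam)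
    (hstar : X astar *ᵥ x ≠ 0) : ∃ Δ, StronglyAttacks lam m X y α astar ε Δ x := by
  classical
  obtain ⟨Δ', hΔ'⟩ := exists_ucbIndex_eq (y := y) (α := α) hlam hstar
    (Finset.univ.sup' ⟨astar, Finset.mem_univ _⟩ fun a => ε + ucbIndex lam m X y α 0 x a)
  refine ⟨Function.update 0 astar (Δ' astar), fun a ha => ?_⟩
  rw [ucbIndex_congr (Function.update_self ..), hΔ',
    ucbIndex_congr (Function.update_of_ne ha ..)]
  exact Finset.le_sup' (fun a => ε + ucbIndex lam m X y α 0 x a) (Finset.mem_univ a)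

theorem exists_stronglyAttacks_of_mulVec_eq_zero (hlam : 0 < lam) (hstar : X astar *ᵥ x = 0)
    (h : ∀ a ≠ astar, X a *ᵥ x = 0 →
      ε + α a * mahNorm (Vmat lam (X a)) x ≤ α astar * mahNorm (Vmat lam (X astar)) x) :
    ∃ Δ, StronglyAttacks lam m X y α astar ε Δ x := by
  classical
  have hpush : ∀ a, ∃ Δ : ∀ a, Fin (m a) → ℝ, X a *ᵥ x ≠ 0 →
      ucbIndex lam m X y α Δ x a = α astar * mahNorm (Vmat lam (X astar)) x - ε := fun a => by
    by_cases hXa : X a *ᵥ x = 0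
    · exact ⟨0, fun h' => absurd hXa h'⟩
    · obtain ⟨Δ, hΔ⟩ := exists_ucbIndex_eq hlam hXa _
      exact ⟨Δ, fun _ => hΔ⟩
  choose Δ' hΔ' using hpush
  refine ⟨fun a => Δ' a a, fun a ha => ?_⟩
  rw [ucbIndex_of_mulVec_eq_zero hlam _ hstar]
  by_cases hXa : X a *ᵥ x = 0
  · rw [ucbIndex_of_mulVec_eq_zero hlam _ hXa]
    exact h a ha hXa
  · rw [ucbIndex_congr (Δ := fun a => Δ' a a) (Δ' := Δ' a) rfl, hΔ' a hXa]
    linarith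

end Bandit

theorem cannot_strongly_attack_iff_general {K d : ℕ}
    (lam : ℝ) (hlam : 0 < lam) (m : Fin K → ℕ)
    (X : ∀ a, Matrix (Fin (m a)) (Fin d) ℝ) (y : ∀ a, Fin (m a) → ℝ)
    (α : Fin K → ℝ) (astar : Fin K) (ε : ℝ) (x : Fin d → ℝ) :
    (¬ ∃ Δ : ∀ a, Fin (m a) → ℝ, StronglyAttacks lam m X y α astar ε Δ x) ↔
      ∃ a : Fin K, a ≠ astar ∧ X astar *ᵥ x = 0 ∧ X a *ᵥ x = 0 ∧
        α astar * mahNorm (Vmat lam (X astar)) x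
          < ε + α a * mahNorm (Vmat lam (X a)) x := by
  constructor
  · intro hno
    by_contra! h
    by_cases hstar : X astar *ᵥ x = 0
    · exact hno (exists_stronglyAttacks_of_mulVec_eq_zero hlam hstar
        fun a ha hXa => h a ha hstar hXa)
    · exact hno (exists_stronglyAttacks_of_mulVec_ne_zero hlam hstar)
  · rintro ⟨a, ha, hstar, hXa, hlt⟩ ⟨Δ, hΔ⟩
    have hattack := hΔ a ha
    rw [ucbIndex_of_mulVec_eq_zero hlam Δ hstar, ucbIndex_of_mulVec_eq_zero hlam Δ hXa]
      at hattack
    linarith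

/-- Theorem 1 of the paper: a context `x` cannot be ε-strongly attacked into pulling
`astar` iff there is a non-target arm `a` with (i) `x ∈ Null(X_{a*}) ∩ Null(X_a)` and
(ii) `α_{a*}‖x‖_{V_{a*}⁻¹} < ε + α_a‖x‖_{V_a⁻¹}`. -/
theorem cannot_strongly_attack_iff {K d : ℕ} (hK : 2 ≤ K) (hd : 1 ≤ d)
    (lam : ℝ) (hlam : 0 < lam) (m : Fin K → ℕ)
    (X : ∀ a, Matrix (Fin (m a)) (Fin d) ℝ) (y : ∀ a, Fin (m a) → ℝ)
    (α : Fin K → ℝ) (astar : Fin K) (ε : ℝ) (hε : 0 < ε) (x : Fin d → ℝ) :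
    (¬ ∃ Δ : ∀ a, Fin (m a) → ℝ, StronglyAttacks lam m X y α astar ε Δ x) ↔
      ∃ a : Fin K, a ≠ astar ∧ X astar *ᵥ x = 0 ∧ X a *ᵥ x = 0 ∧
        α astar * mahNorm (Vmat lam (X astar)) x
          < ε + α a * mahNorm (Vmat lam (X a)) x :=
  cannot_strongly_attack_iff_general lam hlam m X y α astar ε x
end

section
/- If α_{a*}‖x‖_{V_{a*}⁻¹} ≥ ε + α_a‖x‖_{V_a⁻¹} holds for every arm a ≠ a*, then the family of perturbations given by Δ_a = −y_a for every arm a ε-strongly attacks x into pulling a*; in particular, x can be ε-strongly attacked. -/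
open Matrix

/-- If `α_{a*}‖x‖_{V_{a*}⁻¹} ≥ ε + α_a‖x‖_{V_a⁻¹}` for every non-target arm `a`, then
erasing all rewards (`Δ_a = -y_a` for all `a`) ε-strongly attacks `x` into pulling
`a*`; in particular `x` can be ε-strongly attacked. -/
theorem attackable_of_large_bonus {K d : ℕ} (hK : 2 ≤ K) (hd : 1 ≤ d)
    (lam : ℝ) (hlam : 0 < lam) (m : Fin K → ℕ)
    (X : ∀ a, Matrix (Fin (m a)) (Fin d) ℝ) (y : ∀ a, Fin (m a) → ℝ)
    (α : Fin K → ℝ) (astar : Fin K) (ε : ℝ) (hε : 0 < ε) (x : Fin d → ℝ)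
    (h : ∀ a : Fin K, a ≠ astar →
      α astar * mahNorm (Vmat lam (X astar)) x
        ≥ ε + α a * mahNorm (Vmat lam (X a)) x) :
    StronglyAttacks lam m X y α astar ε (fun a => -(y a)) x ∧
      ∃ Δ : ∀ a, Fin (m a) → ℝ, StronglyAttacks lam m X y α astar ε Δ x := by
  have key : StronglyAttacks lam m X y α astar ε (fun a => -(y a)) x := by
    intro a ha
    have hub : ∀ b : Fin K, ucbIndex lam m X y α (fun a => -(y a)) x b
        = α b * mahNorm (Vmat lam (X b)) x := by
      intro b
      simp [ucbIndex, thetaHat, Matrix.mulVec_zero, dotProduct_zero]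
    rw [hub, hub]
    exact h a ha
  exact ⟨key, ⟨_, key⟩⟩
end
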